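/- Suppose 2a + b = 0 (and (a,b) ≠ (0,0)). Then the pair {F_1, x_3}, where F_1 = (2x_0 y_1 + x_2^2 − 2x_1 x_3)^3/(x_3^2 y_1^2), is a set of two functionally independent invariants of the coadjoint representation of d_5^{a,b}. Analogously, if a + 2b = 0, then {F_1, y_1} is such a set. -/

import Mathlib

/-- Structure constants (listed direction) of `d_5^{a,b}`; basis
`X_0 ↦ 0, …, X_3 ↦ 3, Y_1 ↦ 4, V ↦ 5`. -/
noncomputable def strAB (a b : ℂ) (i j s : ℕ) : ℂ :=
  (if i = 0 ∧ (j = 1 ∨ j = 2) ∧ s = j + 1 then 1 else 0) +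
  (if i = 1 ∧ j = 2 ∧ s = 4 then 1 else 0) +
  (if i = 5 ∧ j = 0 ∧ s = 0 then a else 0) +
  (if i = 5 ∧ j = 1 ∧ s = 1 then b else 0) +
  (if i = 5 ∧ j = 2 ∧ s = 2 then a + b else 0) +
  (if i = 5 ∧ j = 3 ∧ s = 3 then 2 * a + b else 0) +
  (if i = 5 ∧ j = 4 ∧ s = 4 then a + 2 * b else 0)

/-- Antisymmetrized structure constants of `d_5^{a,b}`. -/
noncomputable def CAB (a b : ℂ) (i j s : ℕ) : ℂ := strAB a b i j s - strAB a b j i s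

/-- Partial derivative `∂F/∂x_j` in coordinates. -/
noncomputable def pd (j : ℕ) (F : (ℕ → ℂ) → ℂ) (p : ℕ → ℂ) : ℂ :=
  deriv (fun t => F (Function.update p j t)) (p j)

/-- The coadjoint operator `X̂_i = −C_{ij}^k x_k ∂_{x_j}` of `d_5^{a,b}`. -/
noncomputable def opAB (a b : ℂ) (i : ℕ) (F : (ℕ → ℂ) → ℂ) (p : ℕ → ℂ) : ℂ :=
  ∑ j ∈ Finset.range 6, (-(∑ k ∈ Finset.range 6, CAB a b i j k * p k)) * pd j F p

/-- The rational function `F_1 = (2x_0y_1 + x_2² − 2x_1x_3)³/(x_3²y_1²)`. -/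
noncomputable def F1 (p : ℕ → ℂ) : ℂ :=
  (2 * p 0 * p 4 + (p 2) ^ 2 - 2 * p 1 * p 3) ^ 3 / ((p 3) ^ 2 * (p 4) ^ 2)

/-!
Each `X̂_i` is a derivation. The operators `X̂_0, …, X̂_3, Ŷ_1` annihilate
`Q = 2x_0y_1 + x_2² − 2x_1x_3`, `x_3` and `y_1`, while `V̂` scales them with weights
`2(a+b)`, `2a+b` and `a+2b`. Hence `F_1 = Q³/(x_3²y_1²)` has weight
`6(a+b) − 2(2a+b) − 2(a+2b) = 0`, and `x_3` (resp. `y_1`) is invariant exactly when its weight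
vanishes. At `(1, …, 1)` the gradient of `F_1` has `x_0`-component `6`, so it is not a multiple of
the gradient of a coordinate other than `x_0`.
-/

open Function Finset

theorem linearIndependent_pair_single {K ι : Type*} [Field K] [DecidableEq ι] {v : ι → K}
    {k l : ι} (hlk : l ≠ k) (hv : v l ≠ 0) : LinearIndependent K ![v, Pi.single k 1] := by
  rw [linearIndependent_fin2]
  refine ⟨by simp, fun c h => hv ?_⟩
  simpa [hlk] using (congrFun h l).symm

namespace D5ab

theorem hasDerivAt_update_apply (p : ℕ → ℂ) (j m : ℕ) (x : ℂ) :
    HasDerivAt (fun t => update p j t m) (if m = j then 1 else 0) x := by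
  by_cases h : m = j
  · subst h; simpa using hasDerivAt_id' x
  · simpa [h] using hasDerivAt_const x (p m)

theorem pd_coord (p : ℕ → ℂ) (j m : ℕ) : pd j (fun q => q m) p = if m = j then 1 else 0 :=
  (hasDerivAt_update_apply p j m (p j)).deriv

section Derivation

variable {u v : (ℕ → ℂ) → ℂ} {p : ℕ → ℂ}

theorem pd_mul {j : ℕ} (hu : DifferentiableAt ℂ (fun t => u (update p j t)) (p j))
    (hv : DifferentiableAt ℂ (fun t => v (update p j t)) (p j)) :
    pd j (fun q => u q * v q) p = pd j u p * v p + u p * pd j v p := by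
  have h := hu.hasDerivAt.mul hv.hasDerivAt
  rw [update_eq_self] at h
  exact h.deriv

theorem pd_div {j : ℕ} (hu : DifferentiableAt ℂ (fun t => u (update p j t)) (p j))
    (hv : DifferentiableAt ℂ (fun t => v (update p j t)) (p j)) (hv0 : v p ≠ 0) :
    pd j (fun q => u q / v q) p = (pd j u p * v p - u p * pd j v p) / v p ^ 2 := by
  have h := hu.hasDerivAt.div hv.hasDerivAt (by rwa [update_eq_self])
  rw [update_eq_self] at h
  exact h.deriv

theorem pd_pow {j : ℕ} (hu : DifferentiableAt ℂ (fun t => u (update p j t)) (p j)) (n : ℕ) :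
    pd j (fun q => u q ^ n) p = n * u p ^ (n - 1) * pd j u p := by
  have h := hu.hasDerivAt.pow n
  rw [update_eq_self] at h
  exact h.deriv

variable {a b : ℂ} {i : ℕ}

theorem opAB_mul (hu : ∀ j, DifferentiableAt ℂ (fun t => u (update p j t)) (p j))
    (hv : ∀ j, DifferentiableAt ℂ (fun t => v (update p j t)) (p j)) :
    opAB a b i (fun q => u q * v q) p = opAB a b i u p * v p + u p * opAB a b i v p := by
  unfold opAB
  rw [sum_mul, mul_sum, ← sum_add_distrib]
  refine sum_congr rfl fun j _ => ?_
  rw [pd_mul (hu j) (hv j)]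
  ring

theorem opAB_div (hu : ∀ j, DifferentiableAt ℂ (fun t => u (update p j t)) (p j))
    (hv : ∀ j, DifferentiableAt ℂ (fun t => v (update p j t)) (p j)) (hv0 : v p ≠ 0) :
    opAB a b i (fun q => u q / v q) p =
      (opAB a b i u p * v p - u p * opAB a b i v p) / v p ^ 2 := by
  unfold opAB
  rw [sum_mul, mul_sum, ← sum_sub_distrib, sum_div]
  refine sum_congr rfl fun j _ => ?_
  rw [pd_div (hu j) (hv j) hv0]
  ring

theorem opAB_pow (hu : ∀ j, DifferentiableAt ℂ (fun t => u (update p j t)) (p j)) (n : ℕ) :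
    opAB a b i (fun q => u q ^ n) p = n * u p ^ (n - 1) * opAB a b i u p := by
  unfold opAB
  rw [mul_sum]
  refine sum_congr rfl fun j _ => ?_
  rw [pd_pow (hu j)]
  ring

end Derivation

section CoadjointOperators

variable (a b : ℂ) (F : (ℕ → ℂ) → ℂ) (p : ℕ → ℂ)

theorem opAB_X0 :
    opAB a b 0 F p = -p 2 * pd 1 F p - p 3 * pd 2 F p + a * p 0 * pd 5 F p := by
  simp [opAB, CAB, strAB, sum_range_succ]; ring

theorem opAB_X1 :
    opAB a b 1 F p = p 2 * pd 0 F p - p 4 * pd 2 F p + b * p 1 * pd 5 F p := by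
  simp [opAB, CAB, strAB, sum_range_succ]; ring

theorem opAB_X2 :
    opAB a b 2 F p = p 3 * pd 0 F p + p 4 * pd 1 F p + (a + b) * p 2 * pd 5 F p := by
  simp [opAB, CAB, strAB, sum_range_succ]

theorem opAB_X3 : opAB a b 3 F p = (2 * a + b) * p 3 * pd 5 F p := by
  simp [opAB, CAB, strAB, sum_range_succ]

theorem opAB_Y1 : opAB a b 4 F p = (a + 2 * b) * p 4 * pd 5 F p := by
  simp [opAB, CAB, strAB, sum_range_succ]

theorem opAB_V :
    opAB a b 5 F p = -(a * p 0 * pd 0 F p + b * p 1 * pd 1 F p + (a + b) * p 2 * pd 2 F p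
      + (2 * a + b) * p 3 * pd 3 F p + (a + 2 * b) * p 4 * pd 4 F p) := by
  simp [opAB, CAB, strAB, sum_range_succ]; ring

end CoadjointOperators

/-- `f` has `V`-weight `w` at `p`; the sign is chosen so that `x_3` has weight `2a + b`. -/
def IsSemiInvariantAt (a b w : ℂ) (f : (ℕ → ℂ) → ℂ) (p : ℕ → ℂ) : Prop :=
  (∀ i < 5, opAB a b i f p = 0) ∧ opAB a b 5 f p = -(w * f p)

namespace IsSemiInvariantAt

variable {a b w w' : ℂ} {u v : (ℕ → ℂ) → ℂ} {p : ℕ → ℂ}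

theorem opAB_eq_zero (hu : IsSemiInvariantAt a b w u p) (hw : w = 0) {i : ℕ} (hi : i < 6) :
    opAB a b i u p = 0 := by
  rcases Nat.lt_succ_iff_lt_or_eq.mp hi with hi | rfl
  · exact hu.1 i hi
  · simp [hu.2, hw]

theorem mul (hu : IsSemiInvariantAt a b w u p) (hv : IsSemiInvariantAt a b w' v p)
    (hud : ∀ j, DifferentiableAt ℂ (fun t => u (update p j t)) (p j))
    (hvd : ∀ j, DifferentiableAt ℂ (fun t => v (update p j t)) (p j)) :
    IsSemiInvariantAt a b (w + w') (fun q => u q * v q) p := by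
  refine ⟨fun i hi => ?_, ?_⟩
  · rw [opAB_mul hud hvd, hu.1 i hi, hv.1 i hi]; ring
  · rw [opAB_mul hud hvd, hu.2, hv.2]; ring

theorem div (hu : IsSemiInvariantAt a b w u p) (hv : IsSemiInvariantAt a b w' v p)
    (hud : ∀ j, DifferentiableAt ℂ (fun t => u (update p j t)) (p j))
    (hvd : ∀ j, DifferentiableAt ℂ (fun t => v (update p j t)) (p j)) (hv0 : v p ≠ 0) :
    IsSemiInvariantAt a b (w - w') (fun q => u q / v q) p := by
  refine ⟨fun i hi => ?_, ?_⟩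
  · rw [opAB_div hud hvd hv0, hu.1 i hi, hv.1 i hi]; ring
  · rw [opAB_div hud hvd hv0, hu.2, hv.2]; field_simp; ring

theorem pow (hu : IsSemiInvariantAt a b w u p)
    (hud : ∀ j, DifferentiableAt ℂ (fun t => u (update p j t)) (p j)) (n : ℕ) :
    IsSemiInvariantAt a b (n * w) (fun q => u q ^ n) p := by
  refine ⟨fun i hi => ?_, ?_⟩
  · rw [opAB_pow hud, hu.1 i hi, mul_zero]
  · rw [opAB_pow hud, hu.2]
    rcases n with _ | n
    · simp
    · simp only [Nat.add_sub_cancel, pow_succ]; push_cast; ring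

end IsSemiInvariantAt

theorem isSemiInvariantAt_x3 (a b : ℂ) (p : ℕ → ℂ) :
    IsSemiInvariantAt a b (2 * a + b) (fun q => q 3) p := by
  refine ⟨fun i hi => ?_, ?_⟩
  · interval_cases i <;> simp [opAB_X0, opAB_X1, opAB_X2, opAB_X3, opAB_Y1, pd_coord]
  · simp [opAB_V, pd_coord]

theorem isSemiInvariantAt_y1 (a b : ℂ) (p : ℕ → ℂ) :
    IsSemiInvariantAt a b (a + 2 * b) (fun q => q 4) p := by
  refine ⟨fun i hi => ?_, ?_⟩
  · interval_cases i <;> simp [opAB_X0, opAB_X1, opAB_X2, opAB_X3, opAB_Y1, pd_coord]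
  · simp [opAB_V, pd_coord]

def Q (p : ℕ → ℂ) : ℂ := 2 * p 0 * p 4 + p 2 ^ 2 - 2 * p 1 * p 3

theorem hasDerivAt_Q_update (p : ℕ → ℂ) (j : ℕ) :
    HasDerivAt (fun t => Q (update p j t))
      (2 * p 4 * (if 0 = j then 1 else 0) - 2 * p 3 * (if 1 = j then 1 else 0)
        + 2 * p 2 * (if 2 = j then 1 else 0) - 2 * p 1 * (if 3 = j then 1 else 0)
        + 2 * p 0 * (if 4 = j then 1 else 0)) (p j) := by
  have hx (m : ℕ) := hasDerivAt_update_apply p j m (p j)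
  have h := ((((hx 0).const_mul 2).mul (hx 4)).add ((hx 2).pow 2)).sub
    (((hx 1).const_mul 2).mul (hx 3))
  simp only [update_eq_self] at h
  exact h.congr_deriv (by norm_num; ring)

theorem isSemiInvariantAt_Q (a b : ℂ) (p : ℕ → ℂ) :
    IsSemiInvariantAt a b (2 * (a + b)) Q p := by
  have hQ (j : ℕ) : pd j Q p = _ := (hasDerivAt_Q_update p j).deriv
  refine ⟨fun i hi => ?_, ?_⟩
  · interval_cases i <;> simp [opAB_X0, opAB_X1, opAB_X2, opAB_X3, opAB_Y1, hQ] <;> ring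
  · simp [opAB_V, hQ, Q]; ring

theorem isSemiInvariantAt_F1 (a b : ℂ) {p : ℕ → ℂ} (hp3 : p 3 ≠ 0) (hp4 : p 4 ≠ 0) :
    IsSemiInvariantAt a b 0 F1 p := by
  have hx (m j : ℕ) := (hasDerivAt_update_apply p j m (p j)).differentiableAt
  have hQ (j : ℕ) := (hasDerivAt_Q_update p j).differentiableAt
  have hD := ((isSemiInvariantAt_x3 a b p).pow (hx 3) 2).mul
    ((isSemiInvariantAt_y1 a b p).pow (hx 4) 2) (fun j => (hx 3 j).pow 2) (fun j => (hx 4 j).pow 2)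
  have h := ((isSemiInvariantAt_Q a b p).pow hQ 3).div hD (fun j => (hQ j).pow 3)
    (fun j => ((hx 3 j).pow 2).mul ((hx 4 j).pow 2)) (by simp [hp3, hp4])
  show IsSemiInvariantAt a b 0 (fun q => Q q ^ 3 / (q 3 ^ 2 * q 4 ^ 2)) p
  convert h using 1
  push_cast
  ring

theorem pd_zero_F1_one : pd 0 F1 (fun _ => 1) = 6 := by
  have e : (fun t => F1 (update (fun _ => 1) 0 t)) = fun t : ℂ => (2 * t - 1) ^ 3 := by
    funext t; simp [F1]; ring
  have h := (((hasDerivAt_id' (1 : ℂ)).const_mul 2).sub_const 1).pow 3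
  rw [pd, e]
  exact h.deriv.trans (by norm_num)

theorem grad_coord_eq_single (p : ℕ → ℂ) {m : ℕ} (hm : m < 6) :
    (fun j : Fin 6 => pd j.1 (fun q => q m) p) = Pi.single ⟨m, hm⟩ 1 := by
  funext j
  simp [pd_coord, Pi.single_apply, Fin.ext_iff, eq_comm]

theorem linearIndependent_grad_F1_grad_coord {m : ℕ} (hm0 : m ≠ 0) (hm : m < 6) :
    LinearIndependent ℂ ![fun j : Fin 6 => pd j.1 F1 (fun _ => 1),
      fun j : Fin 6 => pd j.1 (fun q => q m) (fun _ => 1)] := by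
  rw [grad_coord_eq_single _ hm]
  refine linearIndependent_pair_single (l := 0) (by simp [Fin.ext_iff, Ne.symm hm0]) ?_
  simp [pd_zero_F1_one]

end D5ab

theorem invariants_d5ab_center_general (a b : ℂ) :
    (2 * a + b = 0 →
      (∀ p : ℕ → ℂ, p 3 ≠ 0 → p 4 ≠ 0 → ∀ i < 6,
        opAB a b i F1 p = 0 ∧ opAB a b i (fun q => q 3) p = 0) ∧
      (∃ p : ℕ → ℂ, p 3 ≠ 0 ∧ p 4 ≠ 0 ∧
        LinearIndependent ℂ
          ![fun j : Fin 6 => pd j.1 F1 p, fun j : Fin 6 => pd j.1 (fun q => q 3) p])) ∧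
    (a + 2 * b = 0 →
      (∀ p : ℕ → ℂ, p 3 ≠ 0 → p 4 ≠ 0 → ∀ i < 6,
        opAB a b i F1 p = 0 ∧ opAB a b i (fun q => q 4) p = 0) ∧
      (∃ p : ℕ → ℂ, p 3 ≠ 0 ∧ p 4 ≠ 0 ∧
        LinearIndependent ℂ
          ![fun j : Fin 6 => pd j.1 F1 p, fun j : Fin 6 => pd j.1 (fun q => q 4) p])) := by
  have hF1 {p : ℕ → ℂ} (hp3 : p 3 ≠ 0) (hp4 : p 4 ≠ 0) {i : ℕ} (hi : i < 6) :
      opAB a b i F1 p = 0 :=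
    (D5ab.isSemiInvariantAt_F1 a b hp3 hp4).opAB_eq_zero rfl hi
  refine ⟨fun h => ⟨fun p hp3 hp4 i hi => ⟨hF1 hp3 hp4 hi, ?_⟩, ?_⟩,
    fun h => ⟨fun p hp3 hp4 i hi => ⟨hF1 hp3 hp4 hi, ?_⟩, ?_⟩⟩
  · exact (D5ab.isSemiInvariantAt_x3 a b p).opAB_eq_zero h hi
  · exact ⟨fun _ => 1, one_ne_zero, one_ne_zero,
      D5ab.linearIndependent_grad_F1_grad_coord three_ne_zero (by norm_num)⟩
  · exact (D5ab.isSemiInvariantAt_y1 a b p).opAB_eq_zero h hi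
  · exact ⟨fun _ => 1, one_ne_zero, one_ne_zero,
      D5ab.linearIndependent_grad_F1_grad_coord four_ne_zero (by norm_num)⟩

/-- If `2a + b = 0` (and `(a,b) ≠ (0,0)`) then `{F_1, x_3}` is a set of two
functionally independent invariants of the coadjoint representation of
`d_5^{a,b}`; analogously if `a + 2b = 0` then `{F_1, y_1}` is such a set. -/
theorem invariants_d5ab_center (a b : ℂ) (hab : ¬(a = 0 ∧ b = 0)) :
    (2 * a + b = 0 →
      (∀ p : ℕ → ℂ, p 3 ≠ 0 → p 4 ≠ 0 → ∀ i < 6,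
        opAB a b i F1 p = 0 ∧ opAB a b i (fun q => q 3) p = 0) ∧
      (∃ p : ℕ → ℂ, p 3 ≠ 0 ∧ p 4 ≠ 0 ∧
        LinearIndependent ℂ
          ![fun j : Fin 6 => pd j.1 F1 p, fun j : Fin 6 => pd j.1 (fun q => q 3) p])) ∧
    (a + 2 * b = 0 →
      (∀ p : ℕ → ℂ, p 3 ≠ 0 → p 4 ≠ 0 → ∀ i < 6,
        opAB a b i F1 p = 0 ∧ opAB a b i (fun q => q 4) p = 0) ∧
      (∃ p : ℕ → ℂ, p 3 ≠ 0 ∧ p 4 ≠ 0 ∧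
        LinearIndependent ℂ
          ![fun j : Fin 6 => pd j.1 F1 p, fun j : Fin 6 => pd j.1 (fun q => q 4) p])) :=
  invariants_d5ab_center_general a b
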